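/- Let 𝒜 be a unital C*-algebra and (V, V⁺, e) an AOU 𝒜-space. Then the family (C_n^{max}(V;𝒜))_{n∈ℕ} is an operator 𝒜-system structure on V; that is: each C_n^{max}(V;𝒜) is a cone contained in M_n(V)_h with C_n^{max}(V;𝒜) ∩ (−C_n^{max}(V;𝒜)) = {0}, C_1^{max}(V;𝒜) = V⁺, the family is 𝒜-compatible, and for every n the element e_n is an Archimedean order unit for C_n^{max}(V;𝒜). -/

import Mathlib

open Matrix

noncomputable section

/-- An AOU `𝒜`-space: an Archimedean order unit *-vector space `(V, pos, e)` which is an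
`A`-bimodule (actions `l`, `r`) satisfying `(a·x)* = x*·a*`, `a·e = e·a` and
`a*·x·a ∈ V⁺` for `x ∈ V⁺`. -/
structure AOUPack (A V : Type*) [Ring A] [StarRing A] [Algebra ℂ A]
    [AddCommGroup V] [Module ℂ V] [StarAddMonoid V] [StarModule ℂ V] where
  /-- the left action `a · x` -/
  l : A → V → V
  /-- the right action `x · a` -/
  r : V → A → V
  /-- the cone `V⁺` of positive elements -/
  pos : Set V
  /-- the Archimedean order unit -/
  e : V
  l_add : ∀ a b x, l (a + b) x = l a x + l b x
  add_l : ∀ a x y, l a (x + y) = l a x + l a y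
  smul_l : ∀ (c : ℂ) a x, l (c • a) x = c • l a x
  l_smul : ∀ (c : ℂ) a x, l a (c • x) = c • l a x
  r_add : ∀ x y a, r (x + y) a = r x a + r y a
  add_r : ∀ x a b, r x (a + b) = r x a + r x b
  smul_r : ∀ (c : ℂ) x a, r (c • x) a = c • r x a
  r_smul : ∀ (c : ℂ) x a, r x (c • a) = c • r x a
  mul_l : ∀ a b x, l (a * b) x = l a (l b x)
  mul_r : ∀ x a b, r x (a * b) = r (r x a) b
  l_r_assoc : ∀ a x b, r (l a x) b = l a (r x b)
  one_l : ∀ x, l 1 x = x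
  star_l : ∀ a x, star (l a x) = r (star x) (star a)
  pos_isSelfAdjoint : ∀ x ∈ pos, star x = x
  pos_add_mem : ∀ x ∈ pos, ∀ y ∈ pos, x + y ∈ pos
  pos_smul_mem : ∀ (t : ℝ), 0 ≤ t → ∀ x ∈ pos, (t : ℂ) • x ∈ pos
  pos_nonempty : pos.Nonempty
  pos_salient : ∀ x ∈ pos, -x ∈ pos → x = 0
  e_isSelfAdjoint : star e = e
  e_orderUnit : ∀ x, star x = x → ∃ t : ℝ, 0 < t ∧ (t : ℂ) • e - x ∈ pos
  e_arch : ∀ x, (∀ t : ℝ, 0 < t → x + (t : ℂ) • e ∈ pos) → x ∈ pos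
  e_comm : ∀ a, l a e = r e a
  conj_mem : ∀ a, ∀ x ∈ pos, r (l (star a) x) a ∈ pos

namespace AOUPack

variable {A V : Type*} [Ring A] [StarRing A] [Algebra ℂ A]
  [AddCommGroup V] [Module ℂ V] [StarAddMonoid V] [StarModule ℂ V]

variable (P : AOUPack A V)

/-- The action of a matrix over `A` on a matrix over `V` from the left:
`(M · X)_{ij} = Σ_p M_{ip} · X_{pj}`. -/
def amul {k m n : ℕ} (M : Matrix (Fin k) (Fin m) A) (X : Matrix (Fin m) (Fin n) V) :
    Matrix (Fin k) (Fin n) V :=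
  Matrix.of fun i j => ∑ p, P.l (M i p) (X p j)

/-- The action of a matrix over `A` on a matrix over `V` from the right:
`(X · N)_{ij} = Σ_p X_{ip} · N_{pj}`. -/
def vmul {m n l : ℕ} (X : Matrix (Fin m) (Fin n) V) (N : Matrix (Fin n) (Fin l) A) :
    Matrix (Fin m) (Fin l) V :=
  Matrix.of fun i j => ∑ p, P.r (X i p) (N p j)

/-- The congruence `M* · X · M` of `X ∈ M_m(V)` by `M ∈ M_{m,n}(A)`. -/
def conj {m n : ℕ} (M : Matrix (Fin m) (Fin n) A) (X : Matrix (Fin m) (Fin m) V) :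
    Matrix (Fin n) (Fin n) V :=
  P.vmul (P.amul Mᴴ X) M

/-- The diagonal matrix `e_n ∈ M_n(V)` with all diagonal entries equal to `e`. -/
def matE (n : ℕ) : Matrix (Fin n) (Fin n) V := Matrix.diagonal fun _ => P.e

/-- `C_n^{min}(V; A)`: hermitian `X ∈ M_n(V)` with `C* · X · C ∈ V⁺` for every
column `C ∈ M_{n,1}(A)`. -/
def Cmin (n : ℕ) : Set (Matrix (Fin n) (Fin n) V) :=
  {X | Xᴴ = X ∧ ∀ C : Matrix (Fin n) (Fin 1) A, P.conj C X 0 0 ∈ P.pos}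

/-- `D_n^{max}(V; A)`: finite sums `Σ_i A_i* · x_i · A_i` with `x_i ∈ V⁺` and
`A_i ∈ M_{1,n}(A)`. -/
def Dmax (n : ℕ) : Set (Matrix (Fin n) (Fin n) V) :=
  {X | ∃ (k : ℕ) (x : Fin k → V) (a : Fin k → Matrix (Fin 1) (Fin n) A),
    (∀ i, x i ∈ P.pos) ∧ X = ∑ i, P.conj (a i) (Matrix.of fun _ _ => x i)}

/-- `C_n^{max}(V; A) = {X : X + r e_n ∈ D_n^{max}(V; A) for all r > 0}`. -/
def Cmax (n : ℕ) : Set (Matrix (Fin n) (Fin n) V) :=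
  {X | ∀ t : ℝ, 0 < t → X + (t : ℂ) • P.matE n ∈ P.Dmax n}

/-- `Q` is an operator `A`-system structure on `V`: an `A`-compatible matrix ordering
with `Q 1 = V⁺` such that `e_n` is an Archimedean order unit for `Q n` for every `n`. -/
structure IsOperatorSystemStructure (Q : ∀ n : ℕ, Set (Matrix (Fin n) (Fin n) V)) : Prop where
  herm : ∀ n, ∀ X ∈ Q n, Xᴴ = X
  add_mem : ∀ n, ∀ X ∈ Q n, ∀ Y ∈ Q n, X + Y ∈ Q n
  smul_mem : ∀ n (t : ℝ), 0 ≤ t → ∀ X ∈ Q n, (t : ℂ) • X ∈ Q n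
  nonempty : ∀ n, (Q n).Nonempty
  salient : ∀ n, ∀ X ∈ Q n, -X ∈ Q n → X = 0
  compat : ∀ m n (X : Matrix (Fin m) (Fin m) V) (M : Matrix (Fin m) (Fin n) A),
    X ∈ Q m → P.conj M X ∈ Q n
  level_one : ∀ X : Matrix (Fin 1) (Fin 1) V, X ∈ Q 1 ↔ X 0 0 ∈ P.pos
  orderUnit : ∀ n (X : Matrix (Fin n) (Fin n) V), Xᴴ = X →
    ∃ t : ℝ, 0 < t ∧ (t : ℂ) • P.matE n - X ∈ Q n
  arch : ∀ n (X : Matrix (Fin n) (Fin n) V),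
    (∀ t : ℝ, 0 < t → X + (t : ℂ) • P.matE n ∈ Q n) → X ∈ Q n

end AOUPack

/-!
`Dmax` is by construction a cone of hermitian matrices that is stable under congruence
`X ↦ M* X M`. Its Archimedean closure `Cmax` inherits this as soon as congruence respects the
closure, i.e. as soon as `M* e_m M = e·(M* M)` lies below a multiple of `e_n` in `Dmax`. This is
where the C*-structure enters: for a row `v` and `t > ‖v v*‖` write `t - v v* = d* d`; then
`t (t - v* v) = (t - v* v)* (t - v* v) + (d v)* (d v)`, so `e·(t - v* v)` lies in `Dmax`.

Complex polarization, `4 E_pq = Σ_k conj(iᵏ) (δ_p + iᵏ δ_q)* (δ_p + iᵏ δ_q)`, writes every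
hermitian matrix over `V` as a sum of matrices `g* g ⊗ h` with `h` hermitian. Since `h ≤ s e` and
`g* g ⊗ e = e·(g* g)`, each of them lies below a multiple of `e_n`, which gives the order unit.
Pairing the same rank-one matrices with `X` computes `C* X C` for scalar columns `C`; this gives
salience.
-/

open Complex in
theorem Matrix.vecMulVec_polarization {m : Type*} (u w : m → ℂ) :
    ∑ k ∈ Finset.range 4, star (I ^ k) • vecMulVec (star (u + I ^ k • w)) (u + I ^ k • w)
      = (4 : ℂ) • vecMulVec (star u) w := by
  ext i j
  simp only [Finset.sum_range_succ, Finset.sum_range_zero, Matrix.add_apply, Matrix.smul_apply,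
    vecMulVec_apply, Pi.add_apply, Pi.smul_apply, Pi.star_apply, star_add, star_smul,
    smul_eq_mul, Matrix.zero_apply, pow_zero, pow_one, I_sq, I_pow_three, Complex.star_def,
    map_neg, map_one, Complex.conj_I, neg_neg]
  linear_combination (2 * starRingEnd ℂ (w i) * u j - 2 * starRingEnd ℂ (u i) * w j) * I_sq

open Complex in
theorem Matrix.smul_single_one_eq_sum_vecMulVec {n : Type*} [DecidableEq n] (p q : n) :
    (4 : ℂ) • single p q (1 : ℂ) = ∑ k ∈ Finset.range 4, star (I ^ k) •
      vecMulVec (star (Pi.single p 1 + I ^ k • Pi.single q 1))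
        (Pi.single p 1 + I ^ k • Pi.single q 1) := by
  rw [vecMulVec_polarization, single_eq_single_vecMulVec_single, Pi.star_single, star_one]

theorem Matrix.conjTranspose_mul_self_eq_sum_vecMulVec {m n R : Type*} [Fintype m] [Ring R]
    [StarRing R] (M : Matrix m n R) : Mᴴ * M = ∑ k, vecMulVec (star (M k)) (M k) := by
  ext i j
  simp [mul_apply, Matrix.sum_apply, vecMulVec_apply]

theorem Matrix.vecMulVec_star_smul_self {n R : Type*} [Ring R] [StarRing R] (d : R)
    (v : n → R) : vecMulVec (star (d • v)) (d • v) = vecMulVec (star v) ((star d * d) • v) := by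
  ext i j
  simp [vecMulVec_apply, star_mul, mul_assoc]

theorem Matrix.smul_smul_one_sub_vecMulVec {n R : Type*} [Fintype n] [DecidableEq n] [Ring R]
    [StarRing R] [Algebra ℂ R] [StarModule ℂ R] (v : n → R) (t : ℝ) {d : R}
    (hd : star d * d = (t : ℂ) • 1 - v ⬝ᵥ star v) :
    (t : ℂ) • ((t : ℂ) • 1 - vecMulVec (star v) v)
      = ((t : ℂ) • 1 - vecMulVec (star v) v)ᴴ * ((t : ℂ) • 1 - vecMulVec (star v) v)
        + vecMulVec (star (d • v)) (d • v) := by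
  rw [vecMulVec_star_smul_self, hd, conjTranspose_sub, conjTranspose_smul, conjTranspose_one,
    conjTranspose_vecMulVec, star_star, Complex.star_def, Complex.conj_ofReal]
  simp only [sub_mul, mul_sub, smul_mul_smul, Matrix.one_mul, Matrix.mul_one, Matrix.smul_mul,
    Matrix.mul_smul, vecMulVec_mul_vecMulVec, sub_smul, one_smul, vecMulVec_sub, smul_assoc,
    vecMulVec_smul]
  module

theorem IsSelfAdjoint.exists_star_mul_self_eq_smul_one_sub {A : Type*} [CStarAlgebra A]
    {c : A} (hc : IsSelfAdjoint c) : ∃ t : ℝ, 0 < t ∧ ∃ d : A, star d * d = (t : ℂ) • 1 - c := by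
  let _ := CStarAlgebra.spectralOrder A
  have _ := CStarAlgebra.spectralOrderedRing A
  have hnonneg : 0 ≤ (algebraMap ℝ A ‖c‖ - c) + 1 :=
    add_nonneg (sub_nonneg.mpr hc.le_algebraMap_norm_self) zero_le_one
  obtain ⟨d, hd⟩ := CStarAlgebra.nonneg_iff_eq_star_mul_self.mp hnonneg
  refine ⟨‖c‖ + 1, by positivity, d, ?_⟩
  rw [← hd, Algebra.algebraMap_eq_smul_one, Complex.ofReal_add, add_smul, ← Complex.coe_smul,
    Complex.ofReal_one, one_smul]
  abel

section ScalarTensor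

variable {m n V : Type*} [AddCommGroup V] [Module ℂ V]

/-- `B ⊗ x`. -/
def scalarTensor (x : V) : Matrix m n ℂ →ₗ[ℂ] Matrix m n V :=
  (LinearMap.toSpanSingleton ℂ V x).mapMatrix

lemma scalarTensor_apply (x : V) (B : Matrix m n ℂ) (i : m) (j : n) :
    scalarTensor x B i j = B i j • x := rfl

lemma scalarTensor_smul (c : ℂ) (x : V) (B : Matrix m n ℂ) :
    scalarTensor (c • x) B = c • scalarTensor x B := by
  ext i j
  simp only [scalarTensor_apply, Matrix.smul_apply, smul_comm c]

lemma scalarTensor_add (x y : V) (B : Matrix m n ℂ) :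
    scalarTensor (x + y) B = scalarTensor x B + scalarTensor y B := by
  ext i j
  simp only [scalarTensor_apply, Matrix.add_apply, smul_add]

lemma scalarTensor_sub (x y : V) (B : Matrix m n ℂ) :
    scalarTensor (x - y) B = scalarTensor x B - scalarTensor y B := by
  ext i j
  simp only [scalarTensor_apply, Matrix.sub_apply, smul_sub]

lemma single_eq_scalarTensor [DecidableEq m] [DecidableEq n] (i : m) (j : n) (x : V) :
    single i j x = scalarTensor x (single i j 1) := by
  ext i' j'
  simp only [single_apply, scalarTensor_apply, ite_smul, one_smul, zero_smul]

open Complex in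
lemma single_eq_sum_scalarTensor [DecidableEq n] (p q : n) (x : V) :
    single p q x = ∑ k ∈ Finset.range 4, scalarTensor ((4 : ℂ)⁻¹ • star (I ^ k) • x)
      (vecMulVec (star (Pi.single p 1 + I ^ k • Pi.single q 1))
        (Pi.single p 1 + I ^ k • Pi.single q 1)) := by
  have h4 : single p q (1 : ℂ) = (4 : ℂ)⁻¹ • ((4 : ℂ) • single p q 1) := by
    rw [inv_smul_smul₀ (by norm_num)]
  rw [single_eq_scalarTensor, h4, smul_single_one_eq_sum_vecMulVec, map_smul, map_sum,
    Finset.smul_sum]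
  simp only [map_smul, scalarTensor_smul, smul_smul]

variable [StarAddMonoid V] [StarModule ℂ V]

lemma conjTranspose_scalarTensor (x : V) (B : Matrix m n ℂ) :
    (scalarTensor x B)ᴴ = scalarTensor (star x) Bᴴ := by
  ext i j
  simp only [conjTranspose_apply, scalarTensor_apply, star_smul]

lemma single_add_single_star_mem_closure [DecidableEq n] (p q : n) (x : V) :
    single p q x + single q p (star x) ∈ AddSubmonoid.closure
      {Y | ∃ (g : n → ℂ) (h : V), star h = h ∧ Y = scalarTensor h (vecMulVec (star g) g)} := by
  rw [← conjTranspose_single, single_eq_sum_scalarTensor, conjTranspose_sum,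
    ← Finset.sum_add_distrib]
  refine AddSubmonoid.sum_mem _ fun k _ => AddSubmonoid.subset_closure ?_
  rw [conjTranspose_scalarTensor, conjTranspose_vecMulVec, star_star, ← scalarTensor_add]
  exact ⟨_, _, by rw [star_add, star_star, add_comm], rfl⟩

lemma mem_closure_scalarTensor_of_conjTranspose_eq [Fintype n] [DecidableEq n]
    {X : Matrix n n V} (hX : Xᴴ = X) :
    X ∈ AddSubmonoid.closure
      {Y | ∃ (g : n → ℂ) (h : V), star h = h ∧ Y = scalarTensor h (vecMulVec (star g) g)} := by
  have hdecomp : X = ∑ p, ∑ q,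
      (single p q ((2 : ℂ)⁻¹ • X p q) + single q p (star ((2 : ℂ)⁻¹ • X p q))) := by
    ext i j
    have hji : star (X j i) = X i j := by rw [← conjTranspose_apply, hX]
    simp only [star_smul, star_inv₀, star_ofNat, Finset.sum_add_distrib, Matrix.sum_apply,
      Matrix.add_apply, single_apply, ite_and, Finset.sum_ite_irrel, Finset.sum_ite_eq',
      Finset.mem_univ, ↓reduceIte, Finset.sum_const_zero, hji]
    module
  rw [hdecomp]
  exact sum_mem fun p _ => sum_mem fun q _ => single_add_single_star_mem_closure p q _

end ScalarTensor

section ScalarPairing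

variable {m n V : Type*} [Fintype m] [Fintype n] [AddCommGroup V] [Module ℂ V]

def scalarPairing (X : Matrix m n V) : Matrix m n ℂ →ₗ[ℂ] V where
  toFun B := ∑ i, ∑ j, B i j • X i j
  map_add' B C := by simp only [Matrix.add_apply, add_smul, Finset.sum_add_distrib]
  map_smul' c B := by
    simp only [Matrix.smul_apply, smul_eq_mul, mul_smul, Finset.smul_sum, RingHom.id_apply]

lemma scalarPairing_single [DecidableEq m] [DecidableEq n] (X : Matrix m n V) (i : m)
    (j : n) : scalarPairing X (single i j 1) = X i j := by
  simp [scalarPairing, single_apply, ite_and]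

lemma eq_zero_of_forall_scalarPairing_vecMulVec_eq_zero [DecidableEq n] {X : Matrix n n V}
    (h : ∀ g : n → ℂ, scalarPairing X (vecMulVec (star g) g) = 0) : X = 0 := by
  ext p q
  have h4 : (4 : ℂ) • X p q = 0 := by
    rw [← scalarPairing_single X p q, ← map_smul, smul_single_one_eq_sum_vecMulVec, map_sum]
    exact Finset.sum_eq_zero fun k _ => by rw [map_smul, h, smul_zero]
  exact (smul_eq_zero.mp h4).resolve_left (by norm_num)

end ScalarPairing

namespace AOUPack

section Bimodule

variable {A V : Type*} [Ring A] [StarRing A] [Algebra ℂ A]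
  [AddCommGroup V] [Module ℂ V] [StarAddMonoid V] [StarModule ℂ V]
  (P : AOUPack A V)

lemma l_sum (a : A) {ι : Type*} (s : Finset ι) (x : ι → V) :
    P.l a (∑ i ∈ s, x i) = ∑ i ∈ s, P.l a (x i) :=
  map_sum (AddMonoidHom.mk' (P.l a) (P.add_l a)) x s

lemma sum_l {ι : Type*} (s : Finset ι) (a : ι → A) (x : V) :
    P.l (∑ i ∈ s, a i) x = ∑ i ∈ s, P.l (a i) x :=
  map_sum (AddMonoidHom.mk' (P.l · x) (P.l_add · · x)) a s

lemma r_sum (x : V) {ι : Type*} (s : Finset ι) (a : ι → A) :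
    P.r x (∑ i ∈ s, a i) = ∑ i ∈ s, P.r x (a i) :=
  map_sum (AddMonoidHom.mk' (P.r x) (P.add_r x)) a s

lemma sum_r {ι : Type*} (s : Finset ι) (x : ι → V) (a : A) :
    P.r (∑ i ∈ s, x i) a = ∑ i ∈ s, P.r (x i) a :=
  map_sum (AddMonoidHom.mk' (P.r · a) (P.r_add · · a)) x s

lemma l_zero (a : A) : P.l a 0 = 0 :=
  map_zero (AddMonoidHom.mk' (P.l a) (P.add_l a))

lemma r_zero (x : V) : P.r x 0 = 0 :=
  map_zero (AddMonoidHom.mk' (P.r x) (P.add_r x))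

lemma zero_r (a : A) : P.r 0 a = 0 :=
  map_zero (AddMonoidHom.mk' (P.r · a) (P.r_add · · a))

lemma r_one (x : V) : P.r x 1 = x := by
  simpa [P.one_l] using (P.star_l 1 (star x)).symm

lemma star_r (x : V) (a : A) : star (P.r x a) = P.l (star a) (star x) := by
  rw [← star_star (P.l _ _), P.star_l, star_star, star_star]

lemma r_l_algebraMap (c d : ℂ) (x : V) :
    P.r (P.l (algebraMap ℂ A c) x) (algebraMap ℂ A d) = (c * d) • x := by
  simp only [Algebra.algebraMap_eq_smul_one, P.smul_l, P.one_l, P.r_smul, P.smul_r, P.r_one,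
    smul_smul, mul_comm]

lemma amul_amul {k m n n' : ℕ} (M : Matrix (Fin k) (Fin m) A) (N : Matrix (Fin m) (Fin n) A)
    (X : Matrix (Fin n) (Fin n') V) :
    P.amul (M * N) X = P.amul M (P.amul N X) := by
  ext i j
  simp only [amul, of_apply, mul_apply, P.sum_l, P.l_sum, P.mul_l]
  exact Finset.sum_comm

lemma vmul_vmul {m n k k' : ℕ} (X : Matrix (Fin m) (Fin n) V) (M : Matrix (Fin n) (Fin k) A)
    (N : Matrix (Fin k) (Fin k') A) :
    P.vmul X (M * N) = P.vmul (P.vmul X M) N := by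
  ext i j
  simp only [vmul, of_apply, mul_apply, P.r_sum, P.sum_r, P.mul_r]
  exact Finset.sum_comm

lemma vmul_amul {k m n n' : ℕ} (M : Matrix (Fin k) (Fin m) A) (X : Matrix (Fin m) (Fin n) V)
    (N : Matrix (Fin n) (Fin n') A) :
    P.vmul (P.amul M X) N = P.amul M (P.vmul X N) := by
  ext i j
  simp only [vmul, amul, of_apply, P.l_sum, P.sum_r, P.l_r_assoc]
  exact Finset.sum_comm

lemma conj_apply {m n : ℕ} (M : Matrix (Fin m) (Fin n) A) (X : Matrix (Fin m) (Fin m) V)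
    (i j : Fin n) :
    P.conj M X i j = ∑ p, ∑ q, P.r (P.l (star (M q i)) (X q p)) (M p j) := by
  simp [conj, vmul, amul, P.sum_r]

lemma conj_conj {m n k : ℕ} (M : Matrix (Fin m) (Fin n) A) (N : Matrix (Fin n) (Fin k) A)
    (X : Matrix (Fin m) (Fin m) V) :
    P.conj N (P.conj M X) = P.conj (M * N) X := by
  simp only [conj, conjTranspose_mul, amul_amul, vmul_vmul, vmul_amul]

lemma conj_add {m n : ℕ} (M : Matrix (Fin m) (Fin n) A) (X Y : Matrix (Fin m) (Fin m) V) :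
    P.conj M (X + Y) = P.conj M X + P.conj M Y := by
  ext i j
  simp only [conj_apply, Matrix.add_apply, P.add_l, P.r_add, Finset.sum_add_distrib]

lemma conj_smul {m n : ℕ} (c : ℂ) (M : Matrix (Fin m) (Fin n) A)
    (X : Matrix (Fin m) (Fin m) V) :
    P.conj M (c • X) = c • P.conj M X := by
  ext i j
  simp only [conj_apply, Matrix.smul_apply, P.l_smul, P.smul_r, Finset.smul_sum]

lemma conj_conjTranspose {m n : ℕ} (M : Matrix (Fin m) (Fin n) A)
    (X : Matrix (Fin m) (Fin m) V) : (P.conj M X)ᴴ = P.conj M Xᴴ := by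
  ext i j
  simp only [conjTranspose_apply, conj_apply, star_sum, P.star_r, P.star_l, star_star,
    ← P.l_r_assoc]
  exact Finset.sum_comm

def eMul {m n : ℕ} : Matrix (Fin m) (Fin n) A →ₗ[ℂ] Matrix (Fin m) (Fin n) V :=
  LinearMap.mapMatrix ⟨⟨P.r P.e, P.add_r P.e⟩, fun c a => P.r_smul c P.e a⟩

lemma eMul_apply {m n : ℕ} (B : Matrix (Fin m) (Fin n) A) (i : Fin m) (j : Fin n) :
    P.eMul B i j = P.r P.e (B i j) := rfl

lemma eMul_one (n : ℕ) : P.eMul (1 : Matrix (Fin n) (Fin n) A) = P.matE n := by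
  ext i j
  rcases eq_or_ne i j with rfl | h
  · simp [eMul_apply, matE, P.r_one]
  · simp [eMul_apply, matE, h, P.r_zero]

lemma conj_matE {m n : ℕ} (M : Matrix (Fin m) (Fin n) A) :
    P.conj M (P.matE m) = P.eMul (Mᴴ * M) := by
  ext i j
  simp only [conj_apply, eMul_apply, mul_apply, conjTranspose_apply, matE, diagonal_apply,
    P.r_sum]
  refine Finset.sum_congr rfl fun p _ => ?_
  rw [Finset.sum_eq_single p (fun q _ hq => by rw [if_neg hq, P.l_zero, P.zero_r])
    (by simp), if_pos rfl, P.e_comm, ← P.mul_r]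

end Bimodule

section Cones

variable {A V : Type*} [Ring A] [StarRing A] [Algebra ℂ A]
  [AddCommGroup V] [Module ℂ V] [StarAddMonoid V] [StarModule ℂ V]
  (P : AOUPack A V)

lemma zero_mem_pos : (0 : V) ∈ P.pos := by
  obtain ⟨x, hx⟩ := P.pos_nonempty
  simpa using P.pos_smul_mem 0 le_rfl x hx

lemma e_mem_pos : P.e ∈ P.pos := by
  obtain ⟨x, hx⟩ := P.pos_nonempty
  obtain ⟨t, ht, hte⟩ := P.e_orderUnit x (P.pos_isSelfAdjoint x hx)
  have h : (t : ℂ) • P.e ∈ P.pos := by simpa using P.pos_add_mem _ hx _ hte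
  have h' := P.pos_smul_mem t⁻¹ (by positivity) _ h
  rwa [smul_smul, ← Complex.ofReal_mul, inv_mul_cancel₀ ht.ne', Complex.ofReal_one,
    one_smul] at h'

lemma zero_mem_dmax (n : ℕ) : (0 : Matrix (Fin n) (Fin n) V) ∈ P.Dmax n :=
  ⟨0, ![], ![], by simp, by simp⟩

lemma add_mem_dmax {n : ℕ} {X Y : Matrix (Fin n) (Fin n) V} (hX : X ∈ P.Dmax n)
    (hY : Y ∈ P.Dmax n) : X + Y ∈ P.Dmax n := by
  obtain ⟨k₁, x₁, a₁, hx₁, rfl⟩ := hX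
  obtain ⟨k₂, x₂, a₂, hx₂, rfl⟩ := hY
  exact ⟨k₁ + k₂, Fin.append x₁ x₂, Fin.append a₁ a₂,
    Fin.addCases (by simpa) (by simpa), by simp [Fin.sum_univ_add]⟩

lemma sum_mem_dmax {n : ℕ} {ι : Type*} (s : Finset ι) {X : ι → Matrix (Fin n) (Fin n) V}
    (hX : ∀ i ∈ s, X i ∈ P.Dmax n) : ∑ i ∈ s, X i ∈ P.Dmax n :=
  Finset.sum_induction X (· ∈ P.Dmax n) (fun _ _ => P.add_mem_dmax) (P.zero_mem_dmax n) hX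

lemma smul_mem_dmax {n : ℕ} {X : Matrix (Fin n) (Fin n) V} {t : ℝ} (ht : 0 ≤ t)
    (hX : X ∈ P.Dmax n) : (t : ℂ) • X ∈ P.Dmax n := by
  obtain ⟨k, x, a, hx, rfl⟩ := hX
  refine ⟨k, fun i => (t : ℂ) • x i, a, fun i => P.pos_smul_mem t ht _ (hx i), ?_⟩
  simp only [Finset.smul_sum, ← P.conj_smul]
  rfl

lemma conj_mem_dmax {m n : ℕ} (M : Matrix (Fin m) (Fin n) A) {X : Matrix (Fin m) (Fin m) V}
    (hX : X ∈ P.Dmax m) : P.conj M X ∈ P.Dmax n := by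
  obtain ⟨k, x, a, hx, rfl⟩ := hX
  refine ⟨k, x, fun i => a i * M, hx, ?_⟩
  simp only [← P.conj_conj]
  exact map_sum (AddMonoidHom.mk' (P.conj M) (P.conj_add M)) _ _

lemma conjTranspose_eq_of_mem_dmax {n : ℕ} {X : Matrix (Fin n) (Fin n) V}
    (hX : X ∈ P.Dmax n) : Xᴴ = X := by
  obtain ⟨k, x, a, hx, rfl⟩ := hX
  rw [conjTranspose_sum]
  refine Finset.sum_congr rfl fun i _ => ?_
  rw [P.conj_conjTranspose]
  congr
  ext
  exact P.pos_isSelfAdjoint _ (hx i)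

lemma mem_dmax_one_iff (X : Matrix (Fin 1) (Fin 1) V) : X ∈ P.Dmax 1 ↔ X 0 0 ∈ P.pos := by
  constructor
  · rintro ⟨k, x, a, hx, rfl⟩
    rw [Matrix.sum_apply]
    refine Finset.sum_induction _ (· ∈ P.pos) (fun a b ha hb => P.pos_add_mem a ha b hb)
      P.zero_mem_pos fun i _ => ?_
    simpa [conj_apply] using P.conj_mem _ _ (hx i)
  · intro hX
    refine ⟨1, fun _ => X 0 0, fun _ => 1, fun _ => hX, ?_⟩
    ext i j
    simp [Subsingleton.elim i 0, Subsingleton.elim j 0, conj_apply, P.one_l, P.r_one]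

lemma eMul_vecMulVec_mem_dmax {n : ℕ} (v : Fin n → A) :
    P.eMul (vecMulVec (star v) v) ∈ P.Dmax n := by
  refine ⟨1, fun _ => P.e, fun _ => of fun _ j => v j, fun _ => P.e_mem_pos, ?_⟩
  have he : (of fun _ _ => P.e : Matrix (Fin 1) (Fin 1) V) = P.matE 1 := by
    ext i j
    simp [Subsingleton.elim i j, matE]
  rw [Fin.sum_univ_one, he, conj_matE]
  congr
  ext i j
  simp [vecMulVec_apply, mul_apply]

lemma eMul_conjTranspose_mul_self_mem_dmax {k n : ℕ} (N : Matrix (Fin k) (Fin n) A) :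
    P.eMul (Nᴴ * N) ∈ P.Dmax n := by
  rw [conjTranspose_mul_self_eq_sum_vecMulVec, map_sum]
  exact P.sum_mem_dmax _ fun p _ => P.eMul_vecMulVec_mem_dmax (N p)

lemma matE_mem_dmax (n : ℕ) : P.matE n ∈ P.Dmax n := by
  simpa [eMul_one] using
    P.eMul_conjTranspose_mul_self_mem_dmax (1 : Matrix (Fin n) (Fin n) A)

lemma mem_cmax_of_mem_dmax {n : ℕ} {X : Matrix (Fin n) (Fin n) V} (hX : X ∈ P.Dmax n) :
    X ∈ P.Cmax n :=
  fun _ ht => P.add_mem_dmax hX (P.smul_mem_dmax ht.le (P.matE_mem_dmax n))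

lemma zero_mem_cmax (n : ℕ) : (0 : Matrix (Fin n) (Fin n) V) ∈ P.Cmax n :=
  P.mem_cmax_of_mem_dmax (P.zero_mem_dmax n)

lemma add_mem_cmax {n : ℕ} {X Y : Matrix (Fin n) (Fin n) V} (hX : X ∈ P.Cmax n)
    (hY : Y ∈ P.Cmax n) : X + Y ∈ P.Cmax n := by
  intro t ht
  convert P.add_mem_dmax (hX (t / 2) (by positivity)) (hY (t / 2) (by positivity)) using 1
  push_cast
  module

lemma smul_mem_cmax {n : ℕ} {X : Matrix (Fin n) (Fin n) V} {t : ℝ} (ht : 0 ≤ t)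
    (hX : X ∈ P.Cmax n) : (t : ℂ) • X ∈ P.Cmax n := by
  rcases ht.eq_or_lt with rfl | ht
  · simpa using P.zero_mem_cmax n
  intro u hu
  convert P.smul_mem_dmax ht.le (hX (u / t) (by positivity)) using 1
  rw [smul_add, smul_smul, ← Complex.ofReal_mul, mul_div_cancel₀ _ ht.ne']

lemma conjTranspose_eq_of_mem_cmax {n : ℕ} {X : Matrix (Fin n) (Fin n) V}
    (hX : X ∈ P.Cmax n) : Xᴴ = X := by
  have h := P.conjTranspose_eq_of_mem_dmax (hX 1 one_pos)
  rwa [conjTranspose_add, conjTranspose_smul,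
    P.conjTranspose_eq_of_mem_dmax (P.matE_mem_dmax n), Complex.star_def, Complex.conj_ofReal,
    add_left_inj] at h

lemma mem_cmax_of_forall_add_smul_matE_mem_cmax {n : ℕ} {X : Matrix (Fin n) (Fin n) V}
    (hX : ∀ t : ℝ, 0 < t → X + (t : ℂ) • P.matE n ∈ P.Cmax n) : X ∈ P.Cmax n := by
  intro t ht
  convert hX (t / 2) (by positivity) (t / 2) (by positivity) using 1
  push_cast
  module

lemma mem_cmax_one_iff (X : Matrix (Fin 1) (Fin 1) V) : X ∈ P.Cmax 1 ↔ X 0 0 ∈ P.pos := by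
  have hentry : ∀ t : ℝ, (X + (t : ℂ) • P.matE 1) 0 0 = X 0 0 + (t : ℂ) • P.e := fun t => by
    simp [matE]
  simp only [Cmax, Set.mem_ofPred_eq, mem_dmax_one_iff, hentry]
  exact ⟨P.e_arch _, fun hX t ht =>
    P.pos_add_mem _ hX _ (P.pos_smul_mem t ht.le _ P.e_mem_pos)⟩

end Cones

section ScalarMatrices

variable {A V : Type*} [Ring A] [StarRing A] [Algebra ℂ A] [StarModule ℂ A]
  [AddCommGroup V] [Module ℂ V] [StarAddMonoid V] [StarModule ℂ V]
  (P : AOUPack A V)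

lemma scalarTensor_vecMulVec_mem_dmax {n : ℕ} (g : Fin n → ℂ) {x : V} (hx : x ∈ P.pos) :
    scalarTensor x (vecMulVec (star g) g) ∈ P.Dmax n := by
  refine ⟨1, fun _ => x, fun _ => of fun _ j => algebraMap ℂ A (g j), fun _ => hx, ?_⟩
  ext i j
  simp [conj_apply, scalarTensor_apply, vecMulVec_apply, ← algebraMap_star_comm,
    P.r_l_algebraMap]

lemma eMul_vecMulVec_algebraMap {n : ℕ} (g : Fin n → ℂ) :
    P.eMul (vecMulVec (star (algebraMap ℂ A ∘ g)) (algebraMap ℂ A ∘ g))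
      = scalarTensor P.e (vecMulVec (star g) g) := by
  ext i j
  simp [eMul_apply, scalarTensor_apply, vecMulVec_apply, Algebra.algebraMap_eq_smul_one,
    P.r_smul, P.r_one, smul_smul, mul_comm]

lemma conj_col_algebraMap {n : ℕ} (g : Fin n → ℂ) (X : Matrix (Fin n) (Fin n) V) :
    P.conj (of fun p (_ : Fin 1) => algebraMap ℂ A (g p)) X 0 0
      = scalarPairing X (vecMulVec (star g) g) := by
  rw [conj_apply, Finset.sum_comm]
  simp [scalarPairing, vecMulVec_apply, ← algebraMap_star_comm, P.r_l_algebraMap]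

end ScalarMatrices

variable {A V : Type*} [CStarAlgebra A]
  [AddCommGroup V] [Module ℂ V] [StarAddMonoid V] [StarModule ℂ V]
  (P : AOUPack A V)

lemma exists_eMul_smul_one_sub_vecMulVec_mem_dmax {n : ℕ} (v : Fin n → A) :
    ∃ t : ℝ, 0 < t ∧ P.eMul ((t : ℂ) • 1 - vecMulVec (star v) v) ∈ P.Dmax n := by
  have hc : IsSelfAdjoint (v ⬝ᵥ star v) := by
    simp [IsSelfAdjoint, dotProduct, star_sum, star_mul]
  obtain ⟨t, ht, d, hd⟩ := hc.exists_star_mul_self_eq_smul_one_sub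
  refine ⟨t, ht, ?_⟩
  have hG := congrArg P.eMul (smul_smul_one_sub_vecMulVec v t hd)
  rw [map_smul, map_add] at hG
  have h := P.smul_mem_dmax (inv_pos.mpr ht).le (hG ▸ P.add_mem_dmax
    (P.eMul_conjTranspose_mul_self_mem_dmax _) (P.eMul_vecMulVec_mem_dmax (d • v)))
  rwa [smul_smul, ← Complex.ofReal_mul, inv_mul_cancel₀ ht.ne', Complex.ofReal_one,
    one_smul] at h

lemma exists_eMul_smul_one_sub_conjTranspose_mul_self_mem_dmax {m n : ℕ}
    (M : Matrix (Fin m) (Fin n) A) :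
    ∃ t : ℝ, 0 < t ∧ P.eMul ((t : ℂ) • 1 - Mᴴ * M) ∈ P.Dmax n := by
  choose t ht hmem using fun p => P.exists_eMul_smul_one_sub_vecMulVec_mem_dmax (M p)
  -- the summand `1` keeps the bound positive when `m = 0`
  refine ⟨1 + ∑ p, t p,
    add_pos_of_pos_of_nonneg one_pos (Finset.sum_nonneg fun p _ => (ht p).le), ?_⟩
  have hsplit : ((1 + ∑ p, t p : ℝ) : ℂ) • (1 : Matrix (Fin n) (Fin n) A) - Mᴴ * M
      = 1 + ∑ p, ((t p : ℂ) • 1 - vecMulVec (star (M p)) (M p)) := by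
    rw [conjTranspose_mul_self_eq_sum_vecMulVec, Finset.sum_sub_distrib, ← Finset.sum_smul]
    push_cast
    rw [add_smul, one_smul]
    abel
  rw [hsplit, map_add, map_sum, eMul_one]
  exact P.add_mem_dmax (P.matE_mem_dmax n) (P.sum_mem_dmax _ fun p _ => hmem p)

lemma conj_mem_cmax {m n : ℕ} (M : Matrix (Fin m) (Fin n) A) {X : Matrix (Fin m) (Fin m) V}
    (hX : X ∈ P.Cmax m) : P.conj M X ∈ P.Cmax n := by
  obtain ⟨T, hT, hMT⟩ := P.exists_eMul_smul_one_sub_conjTranspose_mul_self_mem_dmax M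
  intro t ht
  have hs : 0 < t / T := div_pos ht hT
  have key : P.conj M X + (t : ℂ) • P.matE n = P.conj M (X + ((t / T : ℝ) : ℂ) • P.matE m)
      + ((t / T : ℝ) : ℂ) • P.eMul ((T : ℂ) • 1 - Mᴴ * M) := by
    rw [P.conj_add, P.conj_smul, P.conj_matE, map_sub, map_smul, eMul_one, smul_sub, smul_smul,
      ← Complex.ofReal_mul, div_mul_cancel₀ _ hT.ne']
    abel
  rw [key]
  exact P.add_mem_dmax (P.conj_mem_dmax M (hX _ hs)) (P.smul_mem_dmax hs.le hMT)

lemma eq_zero_of_mem_cmax_of_neg_mem_cmax {n : ℕ} {X : Matrix (Fin n) (Fin n) V}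
    (hX : X ∈ P.Cmax n) (hX' : -X ∈ P.Cmax n) : X = 0 := by
  refine eq_zero_of_forall_scalarPairing_vecMulVec_eq_zero fun g => ?_
  let C : Matrix (Fin n) (Fin 1) A := of fun p _ => algebraMap ℂ A (g p)
  have h₁ := (P.mem_cmax_one_iff _).mp (P.conj_mem_cmax C hX)
  have h₂ := (P.mem_cmax_one_iff _).mp (P.conj_mem_cmax C hX')
  rw [← neg_one_smul ℂ X, P.conj_smul, Matrix.smul_apply, neg_one_smul] at h₂
  rw [← P.conj_col_algebraMap]
  exact P.pos_salient _ h₁ h₂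

def unitDominated (n : ℕ) : AddSubmonoid (Matrix (Fin n) (Fin n) V) where
  carrier := {X | ∃ t : ℝ, 0 < t ∧ (t : ℂ) • P.matE n - X ∈ P.Dmax n}
  zero_mem' := ⟨1, one_pos, by simpa using P.matE_mem_dmax n⟩
  add_mem' := by
    rintro X Y ⟨s, hs, hX⟩ ⟨t, ht, hY⟩
    refine ⟨s + t, by positivity, ?_⟩
    convert P.add_mem_dmax hX hY using 1
    push_cast
    module

lemma scalarTensor_vecMulVec_mem_unitDominated {n : ℕ} (g : Fin n → ℂ) {h : V}
    (hh : star h = h) : scalarTensor h (vecMulVec (star g) g) ∈ P.unitDominated n := by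
  obtain ⟨s, hs, hsh⟩ := P.e_orderUnit h hh
  set ĝ := algebraMap ℂ A ∘ g
  obtain ⟨T, hT, hgT⟩ := P.exists_eMul_smul_one_sub_vecMulVec_mem_dmax ĝ
  refine ⟨s * T, by positivity, ?_⟩
  have key : ((s * T : ℝ) : ℂ) • P.matE n - scalarTensor h (vecMulVec (star g) g)
      = scalarTensor ((s : ℂ) • P.e - h) (vecMulVec (star g) g)
        + (s : ℂ) • P.eMul ((T : ℂ) • 1 - vecMulVec (star ĝ) ĝ) := by
    rw [map_sub, map_smul, eMul_one, eMul_vecMulVec_algebraMap, scalarTensor_sub,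
      scalarTensor_smul]
    push_cast
    module
  rw [key]
  exact P.add_mem_dmax (P.scalarTensor_vecMulVec_mem_dmax g hsh) (P.smul_mem_dmax hs.le hgT)

lemma exists_smul_matE_sub_mem_dmax {n : ℕ} {X : Matrix (Fin n) (Fin n) V} (hX : Xᴴ = X) :
    ∃ t : ℝ, 0 < t ∧ (t : ℂ) • P.matE n - X ∈ P.Dmax n := by
  refine (AddSubmonoid.closure_le (S := P.unitDominated n)).mpr ?_
    (mem_closure_scalarTensor_of_conjTranspose_eq hX)
  rintro _ ⟨g, h, hh, rfl⟩
  exact P.scalarTensor_vecMulVec_mem_unitDominated g hh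

end AOUPack

/-- Theorem 3.8 (first part): `(C_n^{max}(V;𝒜))_{n∈ℕ}` is an operator `𝒜`-system
structure on `V`. -/
theorem cmax_isOperatorSystemStructure
    {A V : Type*} [CStarAlgebra A]
    [AddCommGroup V] [Module ℂ V] [StarAddMonoid V] [StarModule ℂ V]
    (P : AOUPack A V) :
    P.IsOperatorSystemStructure (fun n => P.Cmax n) :=
  { herm := fun _ _ hX => P.conjTranspose_eq_of_mem_cmax hX
    add_mem := fun _ _ hX _ hY => P.add_mem_cmax hX hY
    smul_mem := fun _ _ ht _ hX => P.smul_mem_cmax ht hX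
    nonempty := fun n => ⟨0, P.zero_mem_cmax n⟩
    salient := fun _ _ hX hX' => P.eq_zero_of_mem_cmax_of_neg_mem_cmax hX hX'
    compat := fun _ _ _ M hX => P.conj_mem_cmax M hX
    level_one := P.mem_cmax_one_iff
    orderUnit := fun _ _ hX =>
      (P.exists_smul_matE_sub_mem_dmax hX).imp fun _ ⟨ht, h⟩ => ⟨ht, P.mem_cmax_of_mem_dmax h⟩
    arch := fun _ _ hX => P.mem_cmax_of_forall_add_smul_matE_mem_cmax hX }
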